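/- For every integer N ≥ 2 and every real α with 1 − 1/N² ≤ α < 1, the strict inequality (N−1)·( (1−α²)N² + 2α(α−1)N − (α−1)² ) < (1 + α(N−1))² holds. -/
import Mathlib


/-- Key algebraic positivity estimate: for every integer `N ≥ 2` and every real
`α` with `1 - 1/N² ≤ α < 1`, we have
`(N-1)((1-α²)N² + 2α(α-1)N - (α-1)²) < (1 + α(N-1))²`. -/
theorem key_positivity_estimate (N : ℕ) (hN : 2 ≤ N) (α : ℝ)
    (hα1 : 1 - 1 / (N : ℝ) ^ 2 ≤ α) (hα2 : α < 1) :
    ((N : ℝ) - 1) * ((1 - α ^ 2) * (N : ℝ) ^ 2 + 2 * α * (α - 1) * (N : ℝ) - (α - 1) ^ 2) <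
      (1 + α * ((N : ℝ) - 1)) ^ 2 := by
  have hN2 : (2:ℝ) ≤ N := by exact_mod_cast hN
  have hNpos : (0:ℝ) < (N:ℝ)^2 := by positivity
  have h1 : (N:ℝ)^2 * (1 - α) ≤ 1 := by
    calc (N:ℝ)^2 * (1-α) ≤ (N:ℝ)^2 * (1/(N:ℝ)^2) := by nlinarith
    _ = 1 := by field_simp
  nlinarith [sq_nonneg (1-α), sq_nonneg ((N:ℝ)-1),
    mul_pos (sub_pos.2 hα2) (show (0:ℝ) < (N:ℝ)-1 by linarith),
    sq_nonneg ((N:ℝ)*(1-α)),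
    mul_nonneg (sub_nonneg.2 h1) (le_of_lt (sub_pos.2 hα2)),
    sq_nonneg ((N:ℝ)^2*(1-α)-1)]
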